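/- Let X be a Banach space and Y a closed subspace. Then Sz(Y) ≤ Sz(X) and Sz(X/Y) ≤ Sz(X), and moreover Sz(X) ≤ Sz(X/Y)·Sz(Y). Consequently, for any ordinal ξ, the properties Sz(·) < ω^{ω^ξ} and Sz(·) ≤ ω^{ω^ξ} are three-space properties: if Y and X/Y both have the property, so does X. -/

import Mathlib

open NormedSpace

noncomputable def derivIter {α : Type*} (d : Set α → Set α) (K : Set α) : Ordinal → Set α :=
  fun ξ => Ordinal.limitRecOn ξ K (fun _ ih => d ih)
    (fun o _ ih => ⋂ ζ : Set.Iio o, ih ζ.1 ζ.2)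

/-- The Szlenk slicing derivation: `s_ε(K)` removes from `K` every point contained in
a `w*`-open set whose intersection with `K` has norm diameter at most `ε`. -/
def szSlice {X : Type*} [NormedAddCommGroup X] [NormedSpace ℝ X] (ε : ℝ)
    (K : Set (StrongDual ℝ X)) : Set (StrongDual ℝ X) :=
  {f ∈ K | ∀ W : Set (WeakDual ℝ X), IsOpen W → StrongDual.toWeakDual f ∈ W →
    ε < Metric.diam (K ∩ (fun g => StrongDual.toWeakDual g) ⁻¹' W)}

/-- `Sz(Z) > ζ` for a Banach space `Z`. -/
def SzSpGt (Z : Type*) [NormedAddCommGroup Z] [NormedSpace ℝ Z] (ζ : Ordinal) : Prop :=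
  ∃ ε : ℝ, 0 < ε ∧
    (derivIter (szSlice ε) (Metric.closedBall (0 : StrongDual ℝ Z) 1) ζ).Nonempty

/-- `Sz(Z) ≤ γ` for a Banach space `Z`. -/
def SzSpLe (Z : Type*) [NormedAddCommGroup Z] [NormedSpace ℝ Z] (γ : Ordinal) : Prop :=
  ∀ ε : ℝ, 0 < ε → derivIter (szSlice ε) (Metric.closedBall (0 : StrongDual ℝ Z) 1) γ = ∅


/-!
Restriction `X* → Y*` and composition with the quotient map `(X/Y)* → X*` are weak*-continuous;
the first maps the dual ball onto the dual ball (Hahn–Banach) and is `1`-Lipschitz, the second is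
an isometry. Slicing is compatible with such maps, which gives `Sz Y ≤ Sz X` and
`Sz (X/Y) ≤ Sz X`.

For the product bound, slice `B_{X*}` measuring diameters after restriction to `Y`. Since
restriction maps `B_{X*}` onto `B_{Y*}`, this derivation empties `B_{X*}` after `Sz Y` steps.
A weak*-open slice of `B_{X*}` whose restriction to `Y` has small diameter lies close to a
translate of `3 B_{Y^⊥}`, an isometric copy of `3 B_{(X/Y)*}`; as Szlenk derivations are stable
under small perturbations, `Sz (X/Y)` Szlenk derivations already perform one step of the
restricted derivation, so `Sz (X/Y) · Sz Y` of them empty `B_{X*}`. For the three-space properties, `ω^ω^ξ`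
is a limit ordinal closed under multiplication, and by weak*-compactness a derived set that is
empty at a limit stage is empty at an earlier one.
-/

open Metric Set Pointwise Bornology

section DerivIter

variable {α : Type*} {d d₁ d₂ : Set α → Set α} {K K₁ K₂ G : Set α}

theorem derivIter_zero (d : Set α → Set α) (K : Set α) : derivIter d K 0 = K :=
  Ordinal.limitRecOn_zero ..

theorem derivIter_succ (d : Set α → Set α) (K : Set α) (ξ : Ordinal) :
    derivIter d K (ξ + 1) = d (derivIter d K ξ) :=
  Ordinal.limitRecOn_add_one ..

theorem derivIter_limit (d : Set α → Set α) (K : Set α) {ξ : Ordinal} (h : Order.IsSuccLimit ξ) :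
    derivIter d K ξ = ⋂ ζ : Iio ξ, derivIter d K ζ.1 :=
  Ordinal.limitRecOn_limit _ _ _ _ h

theorem derivIter_subset (hd : ∀ A, d A ⊆ A) (K : Set α) (γ : Ordinal) :
    derivIter d K γ ⊆ K := by
  induction γ using Ordinal.limitRecOn with
  | zero => rw [derivIter_zero]
  | add_one ξ ih => rw [derivIter_succ]; exact (hd _).trans ih
  | limit ξ hξ ih =>
    rw [derivIter_limit _ _ hξ]
    exact (iInter_subset _ ⟨0, hξ.pos⟩).trans (ih 0 hξ.pos)

theorem derivIter_antitone (hd : ∀ A, d A ⊆ A) (K : Set α) : Antitone (derivIter d K) := by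
  intro γ γ' h
  induction γ' using Ordinal.limitRecOn with
  | zero => rw [nonpos_iff_eq_zero.1 h]
  | add_one ξ ih =>
    rw [← Order.succ_eq_add_one] at h
    rcases Order.le_succ_iff_eq_or_le.1 h with rfl | h'
    · exact le_rfl
    · rw [derivIter_succ]; exact (hd _).trans (ih h')
  | limit ξ hξ ih =>
    rcases h.eq_or_lt with rfl | h'
    · exact le_rfl
    · rw [derivIter_limit _ _ hξ]
      exact iInter_subset (fun ζ : Iio ξ => derivIter d K ζ.1) ⟨γ, h'⟩

theorem derivIter_directed (hd : ∀ A, d A ⊆ A) (K : Set α) (ξ : Ordinal) :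
    Directed (· ⊇ ·) fun ζ : Iio ξ => derivIter d K ζ.1 := fun i j =>
  (le_total i.1 j.1).elim (fun h => ⟨j, derivIter_antitone hd K h, le_rfl⟩)
    fun h => ⟨i, le_rfl, derivIter_antitone hd K h⟩

theorem derivIter_eq_empty_of_le (hd : ∀ A, d A ⊆ A) {γ γ' : Ordinal} (h : γ ≤ γ')
    (hγ : derivIter d K γ = ∅) : derivIter d K γ' = ∅ :=
  subset_empty_iff.1 (hγ ▸ derivIter_antitone hd K h)

theorem derivIter_subset_derivIter (hd₂ : ∀ A, d₂ A ⊆ A)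
    (h : ∀ A B, A ⊆ B → B ⊆ G → d₁ A ⊆ d₂ B) (hK : K₁ ⊆ K₂) (hG : K₂ ⊆ G) (γ : Ordinal) :
    derivIter d₁ K₁ γ ⊆ derivIter d₂ K₂ γ := by
  induction γ using Ordinal.limitRecOn with
  | zero => rwa [derivIter_zero, derivIter_zero]
  | add_one ξ ih =>
    rw [derivIter_succ, derivIter_succ]
    exact h _ _ ih ((derivIter_subset hd₂ _ _).trans hG)
  | limit ξ hξ ih =>
    rw [derivIter_limit _ _ hξ, derivIter_limit _ _ hξ]
    exact iInter_mono fun ζ => ih ζ.1 ζ.2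

theorem derivIter_add (hd : ∀ A, d A ⊆ A) (K : Set α) (a b : Ordinal) :
    derivIter d K (a + b) = derivIter d (derivIter d K a) b := by
  induction b using Ordinal.limitRecOn with
  | zero => rw [add_zero, derivIter_zero]
  | add_one ξ ih => rw [← add_assoc, derivIter_succ, derivIter_succ, ih]
  | limit ξ hξ ih =>
    rw [derivIter_limit _ _ hξ, derivIter_limit _ _ (Ordinal.isSuccLimit_add a hξ)]
    refine Subset.antisymm (subset_iInter fun ζ => ?_) (subset_iInter fun ζ => ?_)
    · rw [← ih ζ.1 ζ.2]
      exact iInter_subset (fun ζ' : Iio (a + ξ) => derivIter d K ζ'.1)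
        ⟨a + ζ, (add_lt_add_iff_left a).2 ζ.2⟩
    · have hlt : ζ.1 - a < ξ := Ordinal.sub_lt_of_lt_add ζ.2 hξ.pos
      refine (iInter_subset _ ⟨ζ.1 - a, hlt⟩).trans ?_
      rw [← ih _ hlt]
      exact derivIter_antitone hd K (Ordinal.le_add_sub ζ.1 a)

end DerivIter

section WeakStar

variable {E F : Type*} [NormedAddCommGroup E] [NormedSpace ℝ E]
  [NormedAddCommGroup F] [NormedSpace ℝ F]

def IsWeakStarOpen (U : Set (StrongDual ℝ E)) : Prop :=
  IsOpen (WeakDual.toStrongDual ⁻¹' U)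

def IsWeakStarClosed (C : Set (StrongDual ℝ E)) : Prop :=
  IsClosed (WeakDual.toStrongDual ⁻¹' C)

def IsWeakStarCompact (K : Set (StrongDual ℝ E)) : Prop :=
  IsCompact (WeakDual.toStrongDual ⁻¹' K)

def WeakStarContinuous (m : StrongDual ℝ E → StrongDual ℝ F) : Prop :=
  Continuous fun g : WeakDual ℝ E => StrongDual.toWeakDual (m (WeakDual.toStrongDual g))

theorem isWeakStarOpen_univ : IsWeakStarOpen (univ : Set (StrongDual ℝ E)) := isOpen_univ

theorem IsWeakStarOpen.inter {U V : Set (StrongDual ℝ E)} (hU : IsWeakStarOpen U)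
    (hV : IsWeakStarOpen V) : IsWeakStarOpen (U ∩ V) :=
  IsOpen.inter hU hV

theorem isWeakStarOpen_iUnion {ι : Sort*} {U : ι → Set (StrongDual ℝ E)}
    (h : ∀ i, IsWeakStarOpen (U i)) : IsWeakStarOpen (⋃ i, U i) := by
  rw [IsWeakStarOpen, preimage_iUnion]
  exact isOpen_iUnion h

theorem IsWeakStarClosed.isWeakStarOpen_compl {C : Set (StrongDual ℝ E)}
    (h : IsWeakStarClosed C) : IsWeakStarOpen Cᶜ :=
  h.isOpen_compl

theorem IsWeakStarCompact.isWeakStarClosed {K : Set (StrongDual ℝ E)} (h : IsWeakStarCompact K) :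
    IsWeakStarClosed K :=
  IsCompact.isClosed h

theorem isWeakStarClosed_singleton (f : StrongDual ℝ E) : IsWeakStarClosed {f} :=
  isClosed_singleton (x := StrongDual.toWeakDual f)

theorem IsWeakStarCompact.inter_right {K C : Set (StrongDual ℝ E)} (hK : IsWeakStarCompact K)
    (hC : IsWeakStarClosed C) : IsWeakStarCompact (K ∩ C) :=
  IsCompact.inter_right hK hC

theorem IsWeakStarCompact.diff {K U : Set (StrongDual ℝ E)} (hK : IsWeakStarCompact K)
    (hU : IsWeakStarOpen U) : IsWeakStarCompact (K \ U) :=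
  IsCompact.diff hK hU

theorem isWeakStarCompact_closedBall (f : StrongDual ℝ E) (r : ℝ) :
    IsWeakStarCompact (closedBall f r) :=
  WeakDual.isCompact_closedBall f r

theorem IsWeakStarCompact.add {K L : Set (StrongDual ℝ E)} (hK : IsWeakStarCompact K)
    (hL : IsWeakStarCompact L) : IsWeakStarCompact (K + L) := by
  have hrange : ∀ S : Set (StrongDual ℝ E), S ⊆ range (WeakDual.toStrongDual (𝕜 := ℝ) (E := E)) :=
    fun S => (WeakDual.toStrongDual (𝕜 := ℝ) (E := E)).surjective.range_eq ▸ subset_univ S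
  rw [IsWeakStarCompact, preimage_add _ (WeakDual.toStrongDual (𝕜 := ℝ) (E := E)).injective
    (hrange K) (hrange L)]
  exact IsCompact.add hK hL

theorem isWeakStarCompact_iInter {ι : Sort*} [Nonempty ι] {A : ι → Set (StrongDual ℝ E)}
    (h : ∀ i, IsWeakStarCompact (A i)) : IsWeakStarCompact (⋂ i, A i) := by
  rw [IsWeakStarCompact, preimage_iInter]
  exact (h (Classical.arbitrary ι)).of_isClosed_subset (isClosed_iInter fun i => (h i).isClosed)
    (iInter_subset _ _)

theorem IsWeakStarCompact.nonempty_iInter {ι : Type*} [Nonempty ι] {A : ι → Set (StrongDual ℝ E)}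
    (hdir : Directed (· ⊇ ·) A) (hcp : ∀ i, IsWeakStarCompact (A i))
    (hne : ∀ i, (A i).Nonempty) : (⋂ i, A i).Nonempty := by
  have := IsCompact.nonempty_iInter_of_directed_nonempty_isCompact_isClosed
    (fun i => WeakDual.toStrongDual ⁻¹' A i)
    (fun i j => (hdir i j).imp fun _ hk => ⟨preimage_mono hk.1, preimage_mono hk.2⟩)
    (fun i => (hne i).preimage WeakDual.toStrongDual.surjective) hcp fun i => (hcp i).isClosed
  rw [← preimage_iInter] at this
  obtain ⟨x, hx⟩ := this
  exact ⟨_, hx⟩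

theorem WeakStarContinuous.isWeakStarOpen_preimage {m : StrongDual ℝ E → StrongDual ℝ F}
    (hm : WeakStarContinuous m) {V : Set (StrongDual ℝ F)} (hV : IsWeakStarOpen V) :
    IsWeakStarOpen (m ⁻¹' V) :=
  hV.preimage hm

theorem WeakStarContinuous.isWeakStarClosed_preimage {m : StrongDual ℝ E → StrongDual ℝ F}
    (hm : WeakStarContinuous m) {C : Set (StrongDual ℝ F)} (hC : IsWeakStarClosed C) :
    IsWeakStarClosed (m ⁻¹' C) :=
  hC.preimage hm

theorem WeakStarContinuous.isWeakStarCompact_image {m : StrongDual ℝ E → StrongDual ℝ F}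
    (hm : WeakStarContinuous m) {K : Set (StrongDual ℝ E)} (hK : IsWeakStarCompact K) :
    IsWeakStarCompact (m '' K) := by
  have himage : WeakDual.toStrongDual ⁻¹' (m '' K) = (fun g : WeakDual ℝ E =>
      StrongDual.toWeakDual (m (WeakDual.toStrongDual g))) '' (WeakDual.toStrongDual ⁻¹' K) := by
    ext x
    constructor
    · rintro ⟨a, ha, hax⟩
      exact ⟨StrongDual.toWeakDual a, ha, congrArg StrongDual.toWeakDual hax⟩
    · rintro ⟨y, hy, rfl⟩
      exact ⟨_, hy, rfl⟩
  rw [IsWeakStarCompact, himage]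
  exact hK.image hm

end WeakStar

theorem mem_add_closedBall_zero_iff {G : Type*} [SeminormedAddCommGroup G] {A : Set G} {ε : ℝ}
    {f : G} : f ∈ A + closedBall 0 ε ↔ ∃ g ∈ A, dist g f ≤ ε := by
  constructor
  · rintro ⟨g, hg, e, he, rfl⟩
    exact ⟨g, hg, by rwa [dist_self_add_right, ← mem_closedBall_zero_iff]⟩
  · rintro ⟨g, hg, hgf⟩
    exact ⟨g, hg, f - g, by rwa [mem_closedBall_zero_iff, ← dist_eq_norm'], add_sub_cancel g f⟩

section Slicing

variable {E F : Type*} [NormedAddCommGroup E] [NormedSpace ℝ E]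
  [NormedAddCommGroup F] [NormedSpace ℝ F]

def mapSlice (m : StrongDual ℝ E → StrongDual ℝ F) (ε : ℝ) (K : Set (StrongDual ℝ E)) :
    Set (StrongDual ℝ E) :=
  {f ∈ K | ∀ U, IsWeakStarOpen U → f ∈ U → ε < diam (m '' (K ∩ U))}

theorem mem_szSlice_iff {ε : ℝ} {K : Set (StrongDual ℝ E)} {f : StrongDual ℝ E} :
    f ∈ szSlice ε K ↔ f ∈ K ∧ ∀ U, IsWeakStarOpen U → f ∈ U → ε < diam (K ∩ U) :=
  and_congr_right fun _ => ⟨fun h _ hU hfU => h _ hU hfU, fun h _ hW hfW => h _ hW hfW⟩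

theorem szSlice_eq_mapSlice_id (ε : ℝ) (K : Set (StrongDual ℝ E)) :
    szSlice ε K = mapSlice id ε K := by
  ext f
  simp only [mem_szSlice_iff, mapSlice, image_id, mem_ofPred_eq]

theorem szSlice_subset (ε : ℝ) (K : Set (StrongDual ℝ E)) : szSlice ε K ⊆ K :=
  fun _ hf => hf.1

theorem mapSlice_subset (m : StrongDual ℝ E → StrongDual ℝ F) (ε : ℝ) (K : Set (StrongDual ℝ E)) :
    mapSlice m ε K ⊆ K :=
  fun _ hf => hf.1

theorem szSlice_mono {ε : ℝ} {A B : Set (StrongDual ℝ E)} (hB : IsBounded B) (hAB : A ⊆ B) :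
    szSlice ε A ⊆ szSlice ε B := by
  intro f hf
  rw [mem_szSlice_iff] at hf ⊢
  exact ⟨hAB hf.1, fun U hU hfU => (hf.2 U hU hfU).trans_le
    (diam_mono (inter_subset_inter_left U hAB) (hB.subset inter_subset_left))⟩

theorem mapSlice_subset_szSlice {m : StrongDual ℝ E → StrongDual ℝ F} (hm : LipschitzWith 1 m)
    {ε : ℝ} {A B : Set (StrongDual ℝ E)} (hB : IsBounded B) (hAB : A ⊆ B) :
    mapSlice m ε A ⊆ szSlice ε B := by
  rintro f ⟨hf, h⟩
  rw [mem_szSlice_iff]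
  refine ⟨hAB hf, fun U hU hfU => ?_⟩
  have hAU : IsBounded (A ∩ U) := hB.subset (inter_subset_left.trans hAB)
  calc ε < diam (m '' (A ∩ U)) := h U hU hfU
    _ ≤ 1 * diam (A ∩ U) := hm.diam_image_le _ hAU
    _ ≤ diam (B ∩ U) := by
      rw [one_mul]
      exact diam_mono (inter_subset_inter_left U hAB) (hB.subset inter_subset_left)

theorem szSlice_eq_empty_of_diam_le {δ : ℝ} {K : Set (StrongDual ℝ E)} (h : diam K ≤ δ) :
    szSlice δ K = ∅ :=
  eq_empty_of_forall_notMem fun f hf => ((mem_szSlice_iff.1 hf).2 univ isWeakStarOpen_univ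
    (mem_univ f)).not_ge (by rwa [inter_univ])

theorem isWeakStarCompact_mapSlice {m : StrongDual ℝ E → StrongDual ℝ F} {ε : ℝ}
    {K : Set (StrongDual ℝ E)} (hK : IsWeakStarCompact K) :
    IsWeakStarCompact (mapSlice m ε K) := by
  have hdiff : mapSlice m ε K =
      K \ ⋃ U : {U // IsWeakStarOpen U ∧ diam (m '' (K ∩ U)) ≤ ε}, U.1 := by
    ext f
    refine and_congr_right fun _ => ⟨fun h hf => ?_, fun h U hU hfU => ?_⟩
    · obtain ⟨⟨U, hU, hd⟩, hfU⟩ := mem_iUnion.1 hf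
      exact (h U hU hfU).not_ge hd
    · exact lt_of_not_ge fun hd => h (mem_iUnion.2 ⟨⟨U, hU, hd⟩, hfU⟩)
  rw [hdiff]
  exact hK.diff (isWeakStarOpen_iUnion fun U => U.2.1)

theorem isWeakStarCompact_szSlice {ε : ℝ} {K : Set (StrongDual ℝ E)} (hK : IsWeakStarCompact K) :
    IsWeakStarCompact (szSlice ε K) :=
  szSlice_eq_mapSlice_id ε K ▸ isWeakStarCompact_mapSlice hK

theorem isWeakStarCompact_derivIter {d : Set (StrongDual ℝ E) → Set (StrongDual ℝ E)}
    (hdc : ∀ A, IsWeakStarCompact A → IsWeakStarCompact (d A)) {K : Set (StrongDual ℝ E)}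
    (hK : IsWeakStarCompact K) (γ : Ordinal) : IsWeakStarCompact (derivIter d K γ) := by
  induction γ using Ordinal.limitRecOn with
  | zero => rwa [derivIter_zero]
  | add_one ξ ih => rw [derivIter_succ]; exact hdc _ ih
  | limit ξ hξ ih =>
    rw [derivIter_limit _ _ hξ]
    have : Nonempty (Iio ξ) := ⟨⟨0, hξ.pos⟩⟩
    exact isWeakStarCompact_iInter fun ζ => ih ζ.1 ζ.2

theorem isWeakStarCompact_derivIter_szSlice {ε : ℝ} {K : Set (StrongDual ℝ E)}
    (hK : IsWeakStarCompact K) (γ : Ordinal) : IsWeakStarCompact (derivIter (szSlice ε) K γ) :=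
  isWeakStarCompact_derivIter (fun _ => isWeakStarCompact_szSlice) hK γ

theorem isWeakStarCompact_derivIter_mapSlice {m : StrongDual ℝ E → StrongDual ℝ F} {ε : ℝ}
    {K : Set (StrongDual ℝ E)} (hK : IsWeakStarCompact K) (γ : Ordinal) :
    IsWeakStarCompact (derivIter (mapSlice m ε) K γ) :=
  isWeakStarCompact_derivIter (fun _ => isWeakStarCompact_mapSlice) hK γ

end Slicing

section Dilation

variable {E F : Type*} [NormedAddCommGroup E] [NormedSpace ℝ E]
  [NormedAddCommGroup F] [NormedSpace ℝ F]
  {m : StrongDual ℝ E → StrongDual ℝ F} {c : ℝ}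

theorem injective_of_dist_eq_mul (hc : 0 < c) (hdist : ∀ a b, dist (m a) (m b) = c * dist a b) :
    Function.Injective m := fun a b hab => by
  have := hdist a b
  rw [hab, dist_self, eq_comm, mul_eq_zero] at this
  exact dist_eq_zero.1 (this.resolve_left hc.ne')

theorem isBounded_image_of_dist_eq_mul (hc : 0 < c)
    (hdist : ∀ a b, dist (m a) (m b) = c * dist a b) {S : Set (StrongDual ℝ E)}
    (hS : IsBounded S) : IsBounded (m '' S) :=
  (LipschitzWith.of_dist_le_mul (K := ⟨c, hc.le⟩) fun a b => (hdist a b).le).isBounded_image hS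

theorem diam_image_of_dist_eq_mul (hc : 0 < c) (hdist : ∀ a b, dist (m a) (m b) = c * dist a b)
    {S : Set (StrongDual ℝ E)} (hS : IsBounded S) : diam (m '' S) = c * diam S := by
  have hmS := isBounded_image_of_dist_eq_mul hc hdist hS
  refine le_antisymm (diam_le_of_forall_dist_le (by positivity) ?_) ?_
  · rintro _ ⟨a, ha, rfl⟩ _ ⟨b, hb, rfl⟩
    rw [hdist]
    exact mul_le_mul_of_nonneg_left (dist_le_diam_of_mem hS ha hb) hc.le
  · rw [← le_div_iff₀' hc]
    refine diam_le_of_forall_dist_le (by positivity) fun a ha b hb => ?_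
    rw [le_div_iff₀' hc, ← hdist]
    exact dist_le_diam_of_mem hmS (mem_image_of_mem m ha) (mem_image_of_mem m hb)

theorem szSlice_image (hm : WeakStarContinuous m) (hc : 0 < c)
    (hdist : ∀ a b, dist (m a) (m b) = c * dist a b) {A : Set (StrongDual ℝ E)}
    (hA : IsWeakStarCompact A) (hAb : IsBounded A) (ε : ℝ) :
    szSlice (c * ε) (m '' A) = m '' szSlice ε A := by
  have hdiam : ∀ S ⊆ A, diam (m '' S) = c * diam S := fun S hS =>
    diam_image_of_dist_eq_mul hc hdist (hAb.subset hS)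
  refine Subset.antisymm ?_ ?_
  · rintro _ hg
    rw [mem_szSlice_iff] at hg
    obtain ⟨⟨f, hf, rfl⟩, h⟩ := hg
    refine ⟨f, mem_szSlice_iff.2 ⟨hf, fun U hU hfU => ?_⟩, rfl⟩
    -- `m` maps `A \ U` onto a weak*-compact set missing `m f`; its complement is the image slice.
    have hV : IsWeakStarOpen (m '' (A \ U))ᶜ :=
      (hm.isWeakStarCompact_image (hA.diff hU)).isWeakStarClosed.isWeakStarOpen_compl
    have hfV : m f ∉ m '' (A \ U) := fun ⟨f', hf', he⟩ =>
      hf'.2 (injective_of_dist_eq_mul hc hdist he ▸ hfU)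
    have hsub : m '' A ∩ (m '' (A \ U))ᶜ ⊆ m '' (A ∩ U) := by
      rintro _ ⟨⟨a, ha, rfl⟩, hx⟩
      exact ⟨a, ⟨ha, by_contra fun haU => hx ⟨a, ⟨ha, haU⟩, rfl⟩⟩, rfl⟩
    have hlt : c * ε < c * diam (A ∩ U) := by
      rw [← hdiam _ inter_subset_left]
      exact (h _ hV hfV).trans_le (diam_mono hsub
        (isBounded_image_of_dist_eq_mul hc hdist (hAb.subset inter_subset_left)))
    exact lt_of_mul_lt_mul_left hlt hc.le
  · rintro _ ⟨f, hf, rfl⟩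
    rw [mem_szSlice_iff] at hf ⊢
    refine ⟨mem_image_of_mem m hf.1, fun V hV hfV => ?_⟩
    calc c * ε < c * diam (A ∩ m ⁻¹' V) :=
          (mul_lt_mul_iff_right₀ hc).2 (hf.2 _ (hm.isWeakStarOpen_preimage hV) hfV)
      _ = diam (m '' (A ∩ m ⁻¹' V)) := (hdiam _ inter_subset_left).symm
      _ = diam (m '' A ∩ V) := by rw [image_inter_preimage]

theorem derivIter_szSlice_image (hm : WeakStarContinuous m) (hc : 0 < c)
    (hdist : ∀ a b, dist (m a) (m b) = c * dist a b) {K : Set (StrongDual ℝ E)}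
    (hK : IsWeakStarCompact K) (hKb : IsBounded K) (ε : ℝ) (γ : Ordinal) :
    derivIter (szSlice (c * ε)) (m '' K) γ = m '' derivIter (szSlice ε) K γ := by
  induction γ using Ordinal.limitRecOn with
  | zero => rw [derivIter_zero, derivIter_zero]
  | add_one ξ ih =>
    rw [derivIter_succ, derivIter_succ, ih]
    exact szSlice_image hm hc hdist (isWeakStarCompact_derivIter_szSlice hK ξ)
      (hKb.subset (derivIter_subset (szSlice_subset ε) K ξ)) ε
  | limit ξ hξ ih =>
    have : Nonempty (Iio ξ) := ⟨⟨0, hξ.pos⟩⟩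
    rw [derivIter_limit _ _ hξ, derivIter_limit _ _ hξ,
      (injective_of_dist_eq_mul hc hdist).injOn.image_iInter_eq]
    exact iInter_congr fun ζ => ih ζ.1 ζ.2

end Dilation

section Perturbation

variable {E : Type*} [NormedAddCommGroup E] [NormedSpace ℝ E]

theorem szSlice_subset_add_closedBall {K L : Set (StrongDual ℝ E)} (hL : IsWeakStarCompact L)
    (hLb : IsBounded L) {ε δ : ℝ} (hε : 0 ≤ ε) (hδ : 0 ≤ δ) (hKL : K ⊆ L + closedBall 0 ε) :
    szSlice (2 * δ + 4 * ε) K ⊆ szSlice δ L + closedBall 0 ε := by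
  intro f hf
  by_contra hfn
  rw [mem_szSlice_iff] at hf
  have hthin : ∀ g ∈ L ∩ closedBall f ε, ∃ U, IsWeakStarOpen U ∧ g ∈ U ∧ diam (L ∩ U) ≤ δ := by
    rintro g ⟨hgL, hgf⟩
    have hg : g ∉ szSlice δ L := fun hg =>
      hfn (mem_add_closedBall_zero_iff.2 ⟨g, hg, mem_closedBall.1 hgf⟩)
    simpa [mem_szSlice_iff, hgL] using hg
  choose U hUo hgU hUd using hthin
  set V := ⋃ (g) (hg : g ∈ L ∩ closedBall f ε), U g hg
  -- `V` covers the points of `L` near `f`, so `(L \ V + εB)ᶜ` is a weak*-open neighbourhood of `f`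
  -- whose points in `K` are `ε`-close to thin slices of `L` that meet `closedBall f ε`.
  have hW : IsWeakStarOpen (L \ V + closedBall 0 ε)ᶜ :=
    ((hL.diff (isWeakStarOpen_iUnion fun g => isWeakStarOpen_iUnion fun hg => hUo g hg)).add
      (isWeakStarCompact_closedBall 0 ε)).isWeakStarClosed.isWeakStarOpen_compl
  have hfW : f ∉ L \ V + closedBall 0 ε := fun hfW => by
    obtain ⟨g, hg, hgf⟩ := mem_add_closedBall_zero_iff.1 hfW
    have hgC : g ∈ L ∩ closedBall f ε := ⟨hg.1, mem_closedBall.2 hgf⟩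
    exact hg.2 (mem_iUnion₂.2 ⟨g, hgC, hgU g hgC⟩)
  have hclose : ∀ f' ∈ K ∩ (L \ V + closedBall 0 ε)ᶜ, dist f' f ≤ δ + 2 * ε := by
    rintro f' ⟨hf'K, hf'W⟩
    obtain ⟨g', hg'L, hg'f'⟩ := mem_add_closedBall_zero_iff.1 (hKL hf'K)
    have hg'V : g' ∈ V := by_contra fun hg'V =>
      hf'W (mem_add_closedBall_zero_iff.2 ⟨g', ⟨hg'L, hg'V⟩, hg'f'⟩)
    obtain ⟨g, hgC, hg'U⟩ := mem_iUnion₂.1 hg'V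
    have hg'g : dist g' g ≤ δ := (dist_le_diam_of_mem (hLb.subset inter_subset_left)
      ⟨hg'L, hg'U⟩ ⟨hgC.1, hgU g hgC⟩).trans (hUd g hgC)
    calc dist f' f ≤ dist f' g' + dist g' g + dist g f := dist_triangle4 f' g' g f
      _ ≤ ε + δ + ε := by
        gcongr
        · rwa [dist_comm]
        · exact mem_closedBall.1 hgC.2
      _ = δ + 2 * ε := by ring
  refine (hf.2 _ hW hfW).not_ge (diam_le_of_forall_dist_le (by positivity) fun x hx y hy => ?_)
  linarith [dist_triangle_right x y f, hclose x hx, hclose y hy]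

theorem iInter_add_closedBall_subset {ι : Type*} [Nonempty ι] {A : ι → Set (StrongDual ℝ E)}
    (hdir : Directed (· ⊇ ·) A) (hA : ∀ i, IsWeakStarCompact (A i)) (ε : ℝ) :
    ⋂ i, (A i + closedBall 0 ε) ⊆ (⋂ i, A i) + closedBall 0 ε := by
  intro f hf
  obtain ⟨g, hg⟩ : (⋂ i, A i ∩ closedBall f ε).Nonempty := by
    refine IsWeakStarCompact.nonempty_iInter
      (fun i j => (hdir i j).imp fun _ hk => ⟨inter_subset_inter_left _ hk.1,
        inter_subset_inter_left _ hk.2⟩)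
      (fun i => (hA i).inter_right (isWeakStarCompact_closedBall f ε).isWeakStarClosed)
      fun i => ?_
    obtain ⟨g, hg, hgf⟩ := mem_add_closedBall_zero_iff.1 (mem_iInter.1 hf i)
    exact ⟨g, hg, mem_closedBall.2 hgf⟩
  rw [mem_iInter] at hg
  exact mem_add_closedBall_zero_iff.2 ⟨g, mem_iInter.2 fun i => (hg i).1,
    mem_closedBall.1 (hg (Classical.arbitrary ι)).2⟩

theorem derivIter_szSlice_subset_add_closedBall {K L : Set (StrongDual ℝ E)}
    (hL : IsWeakStarCompact L) (hLb : IsBounded L) {ε δ : ℝ} (hε : 0 ≤ ε) (hδ : 0 ≤ δ)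
    (hKL : K ⊆ L + closedBall 0 ε) (γ : Ordinal) :
    derivIter (szSlice (2 * δ + 4 * ε)) K γ ⊆ derivIter (szSlice δ) L γ + closedBall 0 ε := by
  induction γ using Ordinal.limitRecOn with
  | zero => rwa [derivIter_zero, derivIter_zero]
  | add_one ξ ih =>
    rw [derivIter_succ, derivIter_succ]
    exact szSlice_subset_add_closedBall (isWeakStarCompact_derivIter_szSlice hL ξ)
      (hLb.subset (derivIter_subset (szSlice_subset δ) L ξ)) hε hδ ih
  | limit ξ hξ ih =>
    have : Nonempty (Iio ξ) := ⟨⟨0, hξ.pos⟩⟩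
    rw [derivIter_limit _ _ hξ, derivIter_limit _ _ hξ]
    exact (iInter_mono fun ζ : Iio ξ => ih ζ.1 ζ.2).trans (iInter_add_closedBall_subset
      (derivIter_directed (szSlice_subset δ) L ξ)
      (fun ζ => isWeakStarCompact_derivIter_szSlice hL ζ.1) ε)

theorem derivIter_szSlice_inter_subset {A U : Set (StrongDual ℝ E)} (hU : IsWeakStarOpen U)
    (hA : IsBounded A) (δ : ℝ) (γ : Ordinal) :
    derivIter (szSlice δ) A γ ∩ U ⊆ derivIter (szSlice δ) (A ∩ U) γ := by
  induction γ using Ordinal.limitRecOn with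
  | zero => rw [derivIter_zero, derivIter_zero]
  | add_one ξ ih =>
    rw [derivIter_succ, derivIter_succ]
    rintro f ⟨hf, hfU⟩
    rw [mem_szSlice_iff] at hf
    refine szSlice_mono (hA.subset ((derivIter_subset (szSlice_subset δ) _ ξ).trans
      inter_subset_left)) ih (mem_szSlice_iff.2 ⟨⟨hf.1, hfU⟩, fun V hV hfV => ?_⟩)
    rw [inter_assoc]
    exact hf.2 _ (hU.inter hV) ⟨hfU, hfV⟩
  | limit ξ hξ ih =>
    rw [derivIter_limit _ _ hξ, derivIter_limit _ _ hξ]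
    exact fun f hf => mem_iInter.2 fun ζ : Iio ξ => ih ζ.1 ζ.2 ⟨mem_iInter.1 hf.1 ζ, hf.2⟩

end Perturbation

section Image

variable {E F : Type*} [NormedAddCommGroup E] [NormedSpace ℝ E]
  [NormedAddCommGroup F] [NormedSpace ℝ F] {m : StrongDual ℝ E → StrongDual ℝ F}

theorem szSlice_image_subset_image_mapSlice (hm : WeakStarContinuous m) (hlip : LipschitzWith 1 m)
    {A : Set (StrongDual ℝ E)} (hA : IsWeakStarCompact A) (hAb : IsBounded A) {θ : ℝ}
    (hθ : 0 ≤ θ) : szSlice (2 * θ) (m '' A) ⊆ m '' mapSlice m θ A := by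
  intro y hy
  by_contra hyn
  rw [mem_szSlice_iff] at hy
  have hthin : ∀ f ∈ A ∩ m ⁻¹' {y}, ∃ U, IsWeakStarOpen U ∧ f ∈ U ∧ diam (m '' (A ∩ U)) ≤ θ := by
    rintro f ⟨hfA, hfy⟩
    have hf : f ∉ mapSlice m θ A := fun hf => hyn ⟨f, hf, hfy⟩
    simpa [mapSlice, hfA] using hf
  choose U hUo hfU hUd using hthin
  set V := ⋃ (f) (hf : f ∈ A ∩ m ⁻¹' {y}), U f hf
  -- The fibre of `y` lies in `V`, so `m '' (A \ V)` is a weak*-compact set missing `y`.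
  have hW : IsWeakStarOpen (m '' (A \ V))ᶜ :=
    (hm.isWeakStarCompact_image (hA.diff (isWeakStarOpen_iUnion fun f =>
      isWeakStarOpen_iUnion fun hf => hUo f hf))).isWeakStarClosed.isWeakStarOpen_compl
  have hyW : y ∉ m '' (A \ V) := fun ⟨a, ha, hay⟩ =>
    ha.2 (mem_iUnion₂.2 ⟨a, ⟨ha.1, hay⟩, hfU a ⟨ha.1, hay⟩⟩)
  have hclose : ∀ x ∈ m '' A ∩ (m '' (A \ V))ᶜ, dist x y ≤ θ := by
    rintro _ ⟨⟨a, ha, rfl⟩, haW⟩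
    have haV : a ∈ V := by_contra fun haV => haW ⟨a, ⟨ha, haV⟩, rfl⟩
    obtain ⟨f, hf, haU⟩ := mem_iUnion₂.1 haV
    exact (dist_le_diam_of_mem (hlip.isBounded_image (hAb.subset inter_subset_left))
      ⟨a, ⟨ha, haU⟩, rfl⟩ ⟨f, ⟨hf.1, hfU f hf⟩, hf.2⟩).trans (hUd f hf)
  refine (hy.2 _ hW hyW).not_ge (diam_le_of_forall_dist_le (by positivity) fun x hx z hz => ?_)
  linarith [dist_triangle_right x z y, hclose x hx, hclose z hz]

theorem iInter_image_subset_image_iInter (hm : WeakStarContinuous m) {ι : Type*} [Nonempty ι]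
    {A : ι → Set (StrongDual ℝ E)} (hdir : Directed (· ⊇ ·) A)
    (hA : ∀ i, IsWeakStarCompact (A i)) : ⋂ i, m '' A i ⊆ m '' ⋂ i, A i := by
  intro y hy
  obtain ⟨a, ha⟩ : (⋂ i, A i ∩ m ⁻¹' {y}).Nonempty := by
    refine IsWeakStarCompact.nonempty_iInter
      (fun i j => (hdir i j).imp fun _ hk => ⟨inter_subset_inter_left _ hk.1,
        inter_subset_inter_left _ hk.2⟩)
      (fun i => (hA i).inter_right (hm.isWeakStarClosed_preimage (isWeakStarClosed_singleton y)))
      fun i => ?_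
    obtain ⟨a, ha, rfl⟩ := mem_iInter.1 hy i
    exact ⟨a, ha, rfl⟩
  rw [mem_iInter] at ha
  exact ⟨a, mem_iInter.2 fun i => (ha i).1, (ha (Classical.arbitrary ι)).2⟩

theorem derivIter_szSlice_image_subset_image_mapSlice (hm : WeakStarContinuous m)
    (hlip : LipschitzWith 1 m) {K : Set (StrongDual ℝ E)} (hK : IsWeakStarCompact K)
    (hKb : IsBounded K) {θ : ℝ} (hθ : 0 ≤ θ) (γ : Ordinal) :
    derivIter (szSlice (2 * θ)) (m '' K) γ ⊆ m '' derivIter (mapSlice m θ) K γ := by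
  induction γ using Ordinal.limitRecOn with
  | zero => rw [derivIter_zero, derivIter_zero]
  | add_one ξ ih =>
    rw [derivIter_succ, derivIter_succ]
    have hsub := derivIter_subset (mapSlice_subset m θ) K ξ
    exact (szSlice_mono (hlip.isBounded_image (hKb.subset hsub)) ih).trans
      (szSlice_image_subset_image_mapSlice hm hlip (isWeakStarCompact_derivIter_mapSlice hK ξ)
        (hKb.subset hsub) hθ)
  | limit ξ hξ ih =>
    have : Nonempty (Iio ξ) := ⟨⟨0, hξ.pos⟩⟩
    rw [derivIter_limit _ _ hξ, derivIter_limit _ _ hξ]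
    exact (iInter_mono fun ζ : Iio ξ => ih ζ.1 ζ.2).trans (iInter_image_subset_image_iInter hm
      (derivIter_directed (mapSlice_subset m θ) K ξ)
      fun ζ => isWeakStarCompact_derivIter_mapSlice hK ζ.1)

theorem derivIter_szSlice_image_subset (hm : WeakStarContinuous m) (hlip : LipschitzWith 1 m)
    {K : Set (StrongDual ℝ E)} (hK : IsWeakStarCompact K) (hKb : IsBounded K) {θ : ℝ}
    (hθ : 0 ≤ θ) (γ : Ordinal) :
    derivIter (szSlice (2 * θ)) (m '' K) γ ⊆ m '' derivIter (szSlice θ) K γ :=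
  (derivIter_szSlice_image_subset_image_mapSlice hm hlip hK hKb hθ γ).trans <| image_mono <|
    derivIter_subset_derivIter (szSlice_subset θ)
      (fun _ _ hAB hB => mapSlice_subset_szSlice hlip (hKb.subset hB) hAB) subset_rfl subset_rfl γ

theorem derivIter_mapSlice_subset_preimage (hm : WeakStarContinuous m) {K : Set (StrongDual ℝ E)}
    {L : Set (StrongDual ℝ F)} (hKL : m '' K ⊆ L) (hLb : IsBounded L) (θ : ℝ) (γ : Ordinal) :
    derivIter (mapSlice m θ) K γ ⊆ m ⁻¹' derivIter (szSlice θ) L γ := by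
  induction γ using Ordinal.limitRecOn with
  | zero =>
    rw [derivIter_zero, derivIter_zero]
    exact image_subset_iff.1 hKL
  | add_one ξ ih =>
    rw [derivIter_succ, derivIter_succ]
    rintro f ⟨hf, hthick⟩
    refine mem_szSlice_iff.2 ⟨ih hf, fun V hV hfV => (hthick _ (hm.isWeakStarOpen_preimage hV)
      hfV).trans_le (diam_mono ?_ (hLb.subset (inter_subset_left.trans
        (derivIter_subset (szSlice_subset θ) L ξ))))⟩
    rintro _ ⟨a, ⟨ha, haV⟩, rfl⟩
    exact ⟨ih ha, haV⟩
  | limit ξ hξ ih =>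
    rw [derivIter_limit _ _ hξ, derivIter_limit _ _ hξ, preimage_iInter]
    exact iInter_mono fun ζ : Iio ξ => ih ζ.1 ζ.2

end Image

theorem exists_lt_derivIter_szSlice_eq_empty {E : Type*} [NormedAddCommGroup E] [NormedSpace ℝ E]
    {K : Set (StrongDual ℝ E)} (hK : IsWeakStarCompact K) {Γ : Ordinal}
    (hΓ : Order.IsSuccLimit Γ) {ε : ℝ} (h : derivIter (szSlice ε) K Γ = ∅) :
    ∃ γ < Γ, derivIter (szSlice ε) K γ = ∅ := by
  by_contra! hne
  have : Nonempty (Iio Γ) := ⟨⟨0, hΓ.pos⟩⟩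
  have := IsWeakStarCompact.nonempty_iInter (derivIter_directed (szSlice_subset ε) K Γ)
    (fun ζ => isWeakStarCompact_derivIter_szSlice hK ζ.1) fun ζ => hne ζ.1 ζ.2
  rw [← derivIter_limit _ _ hΓ, h] at this
  exact not_nonempty_empty this

section Precomposition

variable {E F : Type*} [NormedAddCommGroup E] [NormedSpace ℝ E]
  [NormedAddCommGroup F] [NormedSpace ℝ F]

theorem weakStarContinuous_comp_right (T : E →L[ℝ] F) :
    WeakStarContinuous fun g : StrongDual ℝ F => g.comp T :=
  WeakDual.continuous_of_continuous_eval fun x => WeakDual.eval_continuous (T x)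

theorem WeakStarContinuous.const_add_smul {m : StrongDual ℝ E → StrongDual ℝ F}
    (hm : WeakStarContinuous m) (v : StrongDual ℝ F) (c : ℝ) :
    WeakStarContinuous fun g => v + c • m g :=
  WeakDual.continuous_of_continuous_eval fun x =>
    continuous_const.add (continuous_const.mul ((WeakDual.eval_continuous x).comp hm))

theorem norm_comp_le_of_norm_le_one {T : E →L[ℝ] F} (hT : ‖T‖ ≤ 1) (g : StrongDual ℝ F) :
    ‖g.comp T‖ ≤ ‖g‖ :=
  (g.opNorm_comp_le T).trans (mul_le_of_le_one_right (norm_nonneg g) hT)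

theorem lipschitzWith_one_comp_right {T : E →L[ℝ] F} (hT : ‖T‖ ≤ 1) :
    LipschitzWith 1 fun g : StrongDual ℝ F => g.comp T :=
  LipschitzWith.of_dist_le_mul fun a b => by
    rw [dist_eq_norm, dist_eq_norm, ← ContinuousLinearMap.sub_comp, NNReal.coe_one, one_mul]
    exact norm_comp_le_of_norm_le_one hT (a - b)

end Precomposition

section Subspace

variable {X : Type*} [NormedAddCommGroup X] [NormedSpace ℝ X] (Y : Submodule ℝ X)

def restrictDual (f : StrongDual ℝ X) : StrongDual ℝ Y := f.comp Y.subtypeL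

theorem weakStarContinuous_restrictDual : WeakStarContinuous (restrictDual Y) :=
  weakStarContinuous_comp_right Y.subtypeL

theorem lipschitzWith_one_restrictDual : LipschitzWith 1 (restrictDual Y) :=
  lipschitzWith_one_comp_right (Submodule.norm_subtypeL_le Y)

theorem restrictDual_image_closedBall (r : ℝ) :
    restrictDual Y '' closedBall 0 r = closedBall 0 r := by
  refine Subset.antisymm ?_ fun g hg => ?_
  · rintro _ ⟨f, hf, rfl⟩
    exact mem_closedBall_zero_iff.2 ((norm_comp_le_of_norm_le_one (Submodule.norm_subtypeL_le Y)
      f).trans (mem_closedBall_zero_iff.1 hf))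
  · obtain ⟨f, hfg, hnorm⟩ := exists_extension_norm_eq Y g
    refine ⟨f, ?_, ContinuousLinearMap.ext hfg⟩
    rw [mem_closedBall, dist_zero_right g] at hg
    rwa [mem_closedBall, dist_zero_right, hnorm]

theorem exists_restrictDual_eq_zero_norm_sub (f : StrongDual ℝ X) :
    ∃ w, restrictDual Y w = 0 ∧ ‖f - w‖ = ‖restrictDual Y f‖ := by
  obtain ⟨h, hext, hnorm⟩ := exists_extension_norm_eq Y (restrictDual Y f)
  refine ⟨f - h, ContinuousLinearMap.ext fun y => ?_, by rw [sub_sub_cancel, hnorm]⟩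
  simp [restrictDual, hext y]

end Subspace

section Quotient

variable {X : Type*} [NormedAddCommGroup X] [NormedSpace ℝ X]
  (Y : Submodule ℝ X) [IsClosed (Y : Set X)]

theorem norm_comp_mkQL (g : StrongDual ℝ (X ⧸ Y)) : ‖g.comp Y.mkQL‖ = ‖g‖ := by
  have hmkQL : ‖Y.mkQL‖ ≤ 1 := Y.mkQL.opNorm_le_bound zero_le_one fun x => by
    rw [one_mul]
    exact Submodule.Quotient.norm_mk_le Y x
  refine le_antisymm (norm_comp_le_of_norm_le_one hmkQL g) ?_
  refine g.opNorm_le_bound (norm_nonneg _) fun z => le_of_forall_pos_lt_add fun η hη => ?_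
  set C := ‖g.comp Y.mkQL‖
  obtain ⟨x, rfl, hx⟩ := Submodule.Quotient.norm_mk_lt z (div_pos hη (by positivity : 0 < C + 1))
  calc ‖g (Submodule.Quotient.mk x)‖ = ‖g.comp Y.mkQL x‖ := rfl
    _ ≤ C * ‖x‖ := (g.comp Y.mkQL).le_opNorm x
    _ ≤ C * (‖Submodule.Quotient.mk x‖ + η / (C + 1)) := by gcongr
    _ < C * ‖(Submodule.Quotient.mk x : X ⧸ Y)‖ + η := by
      have : C * (η / (C + 1)) < η := by
        rw [mul_div_assoc', div_lt_iff₀ (by positivity)]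
        nlinarith
      linarith

theorem exists_comp_mkQL_eq {w : StrongDual ℝ X} (hw : restrictDual Y w = 0) :
    ∃ g : StrongDual ℝ (X ⧸ Y), g.comp Y.mkQL = w ∧ ‖g‖ = ‖w‖ := by
  set g := Y.liftQL w fun y hy => by simpa [restrictDual] using congrArg (· ⟨y, hy⟩) hw
  have hg : g.comp Y.mkQL = w := ContinuousLinearMap.ext fun _ => rfl
  exact ⟨g, hg, by rw [← hg, norm_comp_mkQL]⟩

end Quotient

section ThreeSpace

variable {X : Type*} [NormedAddCommGroup X] [NormedSpace ℝ X]

theorem szSpGt_of_szSpGt_submodule (Y : Submodule ℝ X) {ζ : Ordinal} (h : SzSpGt Y ζ) :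
    SzSpGt X ζ := by
  obtain ⟨ε, hε, hne⟩ := h
  refine ⟨ε / 2, by positivity, ?_⟩
  have hsub := derivIter_szSlice_image_subset (weakStarContinuous_restrictDual Y)
    (lipschitzWith_one_restrictDual Y) (isWeakStarCompact_closedBall 0 1) isBounded_closedBall
    (θ := ε / 2) (by positivity) ζ
  rw [restrictDual_image_closedBall, mul_div_cancel₀ _ two_ne_zero] at hsub
  exact (hne.mono hsub).of_image

variable (Y : Submodule ℝ X) [IsClosed (Y : Set X)]

theorem dist_comp_mkQL (a b : StrongDual ℝ (X ⧸ Y)) :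
    dist (a.comp Y.mkQL) (b.comp Y.mkQL) = dist a b := by
  rw [dist_eq_norm, dist_eq_norm a b, ← ContinuousLinearMap.sub_comp, norm_comp_mkQL]

theorem szSpGt_of_szSpGt_quotient {ζ : Ordinal} (h : SzSpGt (X ⧸ Y) ζ) : SzSpGt X ζ := by
  obtain ⟨ε, hε, hne⟩ := h
  refine ⟨ε, hε, ?_⟩
  have himage := derivIter_szSlice_image (weakStarContinuous_comp_right Y.mkQL) one_pos
    (fun a b => (dist_comp_mkQL Y a b).trans (one_mul _).symm) (isWeakStarCompact_closedBall 0 1)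
    isBounded_closedBall ε ζ
  rw [one_mul] at himage
  have hball : (fun g : StrongDual ℝ (X ⧸ Y) => g.comp Y.mkQL) '' closedBall 0 1 ⊆
      closedBall 0 1 := by
    rintro _ ⟨g, hg, rfl⟩
    rw [mem_closedBall, dist_zero_right g] at hg
    rwa [mem_closedBall, dist_zero_right, norm_comp_mkQL]
  exact (himage ▸ hne.image _).mono (derivIter_subset_derivIter (szSlice_subset ε)
    (fun _ _ hAB hB => szSlice_mono (isBounded_closedBall.subset hB) hAB) hball subset_rfl ζ)

theorem subset_image_closedBall_add_closedBall {M : Set (StrongDual ℝ X)}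
    (hM : M ⊆ closedBall 0 1) {f : StrongDual ℝ X} (hf : f ∈ M) {ε r : ℝ}
    (hdiam : diam (restrictDual Y '' M) ≤ ε) (hr : 2 + ε ≤ r) :
    M ⊆ (fun g : StrongDual ℝ (X ⧸ Y) => f + r • g.comp Y.mkQL) '' closedBall 0 1 +
      closedBall 0 ε := by
  intro h hh
  obtain ⟨w, hw, hnorm⟩ := exists_restrictDual_eq_zero_norm_sub Y (h - f)
  have hres : ‖h - f - w‖ ≤ ε := by
    rw [hnorm, show restrictDual Y (h - f) = restrictDual Y h - restrictDual Y f from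
      ContinuousLinearMap.sub_comp _ _ _, ← dist_eq_norm (restrictDual Y h)]
    exact (dist_le_diam_of_mem ((lipschitzWith_one_restrictDual Y).isBounded_image
      (isBounded_closedBall.subset hM)) (mem_image_of_mem _ hh) (mem_image_of_mem _ hf)).trans hdiam
  have hwr : ‖w‖ ≤ r :=
    calc ‖w‖ = ‖(h - f) - (h - f - w)‖ := by rw [sub_sub_cancel]
      _ ≤ ‖h‖ + ‖f‖ + ε := (norm_sub_le _ _).trans (add_le_add (norm_sub_le _ _) hres)
      _ ≤ r := by linarith [mem_closedBall_zero_iff.1 (hM hh), mem_closedBall_zero_iff.1 (hM hf)]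
  have hr0 : 0 < r := by linarith [diam_nonneg.trans hdiam]
  have hrw : restrictDual Y (r⁻¹ • w) = 0 := by
    rw [restrictDual, ContinuousLinearMap.smul_comp, ← restrictDual, hw, smul_zero]
  obtain ⟨g, hgw, hg⟩ := exists_comp_mkQL_eq Y hrw
  refine ⟨f + w, ⟨g, ?_, ?_⟩, h - f - w, mem_closedBall_zero_iff.2 hres,
    show f + w + (h - f - w) = h by abel⟩
  · rw [mem_closedBall, dist_zero_right g, hg, norm_smul, Real.norm_of_nonneg (inv_nonneg.2 hr0.le),
      inv_mul_le_iff₀ hr0, mul_one]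
    exact hwr
  · simp only [hgw, smul_inv_smul₀ hr0.ne']

theorem derivIter_szSlice_subset_mapSlice_restrictDual {ε : ℝ} (hε : 0 < ε) (hε1 : ε ≤ 1)
    {α : Ordinal} (hQ : derivIter (szSlice (ε / 3)) (closedBall (0 : StrongDual ℝ (X ⧸ Y)) 1) α = ∅)
    {A : Set (StrongDual ℝ X)} (hAB : A ⊆ closedBall 0 1) :
    derivIter (szSlice (6 * ε)) A α ⊆ mapSlice (restrictDual Y) ε A := by
  intro f hf
  have hfA := derivIter_subset (szSlice_subset _) A α hf
  -- A slice `A ∩ U ∋ f` with thin restriction lies `ε`-close to `f + 3 B_{Y^⊥}`, whose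
  -- `ε`-derivations die out by stage `α`; by perturbation so would those of `A ∩ U` at `6ε`.
  refine ⟨hfA, fun U hU hfU => lt_of_not_ge fun hdiam => ?_⟩
  have hm := (weakStarContinuous_comp_right Y.mkQL).const_add_smul f 3
  have hdist : ∀ a b : StrongDual ℝ (X ⧸ Y),
      dist (f + (3 : ℝ) • a.comp Y.mkQL) (f + (3 : ℝ) • b.comp Y.mkQL) = 3 * dist a b := by
    intro a b
    rw [dist_add_left, dist_smul₀ (3 : ℝ) (a.comp Y.mkQL), dist_comp_mkQL,
      Real.norm_of_nonneg zero_le_three]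
  have hL : derivIter (szSlice ε)
      ((fun g : StrongDual ℝ (X ⧸ Y) => f + (3 : ℝ) • g.comp Y.mkQL) '' closedBall 0 1) α = ∅ := by
    rw [show ε = 3 * (ε / 3) by ring, derivIter_szSlice_image hm three_pos hdist
      (isWeakStarCompact_closedBall 0 1) isBounded_closedBall, hQ, image_empty]
  have hperturb := derivIter_szSlice_subset_add_closedBall
    (hm.isWeakStarCompact_image (isWeakStarCompact_closedBall 0 1))
    (isBounded_image_of_dist_eq_mul three_pos hdist isBounded_closedBall) hε.le hε.le
    (subset_image_closedBall_add_closedBall Y (inter_subset_left.trans hAB) ⟨hfA, hfU⟩ hdiam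
      (by linarith)) α
  rw [hL, empty_add] at hperturb
  refine hperturb (?_ : f ∈ derivIter (szSlice (2 * ε + 4 * ε)) (A ∩ U) α)
  rw [show 2 * ε + 4 * ε = 6 * ε by ring]
  exact derivIter_szSlice_inter_subset hU (isBounded_closedBall.subset hAB) _ α ⟨hf, hfU⟩

theorem derivIter_szSlice_mul_subset_derivIter_mapSlice {ε : ℝ} (hε : 0 < ε) (hε1 : ε ≤ 1)
    {α : Ordinal} (hQ : derivIter (szSlice (ε / 3)) (closedBall (0 : StrongDual ℝ (X ⧸ Y)) 1) α = ∅)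
    (γ : Ordinal) :
    derivIter (szSlice (6 * ε)) (closedBall (0 : StrongDual ℝ X) 1) (α * γ) ⊆
      derivIter (mapSlice (restrictDual Y) ε) (closedBall 0 1) γ := by
  induction γ using Ordinal.limitRecOn with
  | zero => rw [mul_zero, derivIter_zero, derivIter_zero]
  | add_one ξ ih =>
    have hsub := derivIter_subset (mapSlice_subset (restrictDual Y) ε) (closedBall 0 1) ξ
    rw [mul_add_one, derivIter_add (szSlice_subset _), derivIter_succ]
    exact (derivIter_subset_derivIter (szSlice_subset _)
      (fun _ _ hAB hB => szSlice_mono (isBounded_closedBall.subset hB) hAB) ih hsub α).trans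
      (derivIter_szSlice_subset_mapSlice_restrictDual Y hε hε1 hQ hsub)
  | limit ξ hξ ih =>
    rw [derivIter_limit _ _ hξ]
    exact subset_iInter fun ζ : Iio ξ => (derivIter_antitone (szSlice_subset _) _
      (mul_le_mul_right ζ.2.le α)).trans (ih ζ.1 ζ.2)

theorem derivIter_szSlice_mul_eq_empty {δ : ℝ} (hδ : 0 < δ) {α β : Ordinal}
    (hQ : derivIter (szSlice (δ / 18)) (closedBall (0 : StrongDual ℝ (X ⧸ Y)) 1) α = ∅)
    (hY : derivIter (szSlice (δ / 6)) (closedBall (0 : StrongDual ℝ Y) 1) β = ∅) :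
    derivIter (szSlice δ) (closedBall (0 : StrongDual ℝ X) 1) (α * β) = ∅ := by
  rcases le_or_gt 2 δ with hδ2 | hδ2
  · have hαβ : 1 ≤ α * β := by
      refine Order.one_le_iff_ne_zero.2 (mul_ne_zero ?_ ?_) <;> rintro rfl
      · exact (nonempty_closedBall.2 zero_le_one).ne_empty (by rwa [derivIter_zero] at hQ)
      · exact (nonempty_closedBall.2 zero_le_one).ne_empty (by rwa [derivIter_zero] at hY)
    refine derivIter_eq_empty_of_le (szSlice_subset δ) hαβ ?_
    rw [← zero_add (1 : Ordinal), derivIter_succ, derivIter_zero]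
    exact szSlice_eq_empty_of_diam_le ((diam_closedBall zero_le_one).trans (by linarith))
  · have hres : derivIter (mapSlice (restrictDual Y) (δ / 6)) (closedBall 0 1) β = ∅ := by
      refine subset_empty_iff.1 ((derivIter_mapSlice_subset_preimage
        (weakStarContinuous_restrictDual Y) (restrictDual_image_closedBall Y 1).le
        isBounded_closedBall _ β).trans ?_)
      rw [hY, preimage_empty]
    have := derivIter_szSlice_mul_subset_derivIter_mapSlice Y (ε := δ / 6) (by positivity)
      (by linarith) (by convert hQ using 3; ring) β
    rwa [hres, mul_div_cancel₀ _ (by norm_num : (6 : ℝ) ≠ 0), subset_empty_iff] at this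

theorem szSpLe_mul {α β : Ordinal} (hQ : SzSpLe (X ⧸ Y) α) (hY : SzSpLe Y β) :
    SzSpLe X (α * β) :=
  fun δ hδ => derivIter_szSlice_mul_eq_empty Y hδ (hQ _ (by positivity)) (hY _ (by positivity))

theorem szSpLe_of_isPrincipal_mul {Γ : Ordinal} (hΓ : Order.IsSuccLimit Γ)
    (hmul : Ordinal.IsPrincipal (· * ·) Γ) (hQ : SzSpLe (X ⧸ Y) Γ) (hY : SzSpLe Y Γ) :
    SzSpLe X Γ := by
  intro δ hδ
  obtain ⟨α, hα, hQα⟩ := exists_lt_derivIter_szSlice_eq_empty (isWeakStarCompact_closedBall 0 1)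
    hΓ (hQ (δ / 18) (by positivity))
  obtain ⟨β, hβ, hYβ⟩ := exists_lt_derivIter_szSlice_eq_empty (isWeakStarCompact_closedBall 0 1)
    hΓ (hY (δ / 6) (by positivity))
  exact derivIter_eq_empty_of_le (szSlice_subset δ) (hmul hα hβ).le
    (derivIter_szSlice_mul_eq_empty Y hδ hQα hYβ)

end ThreeSpace

theorem szlenk_three_space_general {X : Type*} [NormedAddCommGroup X] [NormedSpace ℝ X]
    (Y : Submodule ℝ X) [hY : IsClosed (Y : Set X)] :
    (∀ ζ : Ordinal, SzSpGt Y ζ → SzSpGt X ζ) ∧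
    (∀ ζ : Ordinal, SzSpGt (X ⧸ Y) ζ → SzSpGt X ζ) ∧
    (∀ α β : Ordinal, SzSpLe (X ⧸ Y) α → SzSpLe Y β → SzSpLe X (α * β)) ∧
    (∀ ξ : Ordinal,
      (∃ γ < Ordinal.omega0 ^ Ordinal.omega0 ^ ξ, SzSpLe (X ⧸ Y) γ) →
      (∃ γ < Ordinal.omega0 ^ Ordinal.omega0 ^ ξ, SzSpLe Y γ) →
      ∃ γ < Ordinal.omega0 ^ Ordinal.omega0 ^ ξ, SzSpLe X γ) ∧
    (∀ ξ : Ordinal,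
      SzSpLe (X ⧸ Y) (Ordinal.omega0 ^ Ordinal.omega0 ^ ξ) →
      SzSpLe Y (Ordinal.omega0 ^ Ordinal.omega0 ^ ξ) →
      SzSpLe X (Ordinal.omega0 ^ Ordinal.omega0 ^ ξ)) := by
  refine ⟨fun _ => szSpGt_of_szSpGt_submodule Y, fun _ => szSpGt_of_szSpGt_quotient Y,
    fun _ _ => szSpLe_mul Y, ?_, fun ξ => szSpLe_of_isPrincipal_mul Y ?_
      (Ordinal.isPrincipal_mul_omega0_opow_opow ξ)⟩
  · rintro ξ ⟨α, hα, hQ⟩ ⟨β, hβ, hYβ⟩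
    exact ⟨α * β, Ordinal.isPrincipal_mul_omega0_opow_opow ξ hα hβ, szSpLe_mul Y hQ hYβ⟩
  · exact Ordinal.isSuccLimit_opow_left Ordinal.isSuccLimit_omega0
      (Ordinal.opow_ne_zero _ Ordinal.omega0_ne_zero)

/-- For a closed subspace `Y` of a Banach space `X`: `Sz Y ≤ Sz X`, `Sz(X/Y) ≤ Sz X`,
`Sz X ≤ Sz(X/Y) · Sz Y`, and the three-space properties for `Sz < ω^(ω^ξ)` and
`Sz ≤ ω^(ω^ξ)`. -/
theorem szlenk_three_space {X : Type*} [NormedAddCommGroup X] [NormedSpace ℝ X]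
    [CompleteSpace X] (Y : Submodule ℝ X) [hY : IsClosed (Y : Set X)] :
    (∀ ζ : Ordinal, SzSpGt Y ζ → SzSpGt X ζ) ∧
    (∀ ζ : Ordinal, SzSpGt (X ⧸ Y) ζ → SzSpGt X ζ) ∧
    (∀ α β : Ordinal, SzSpLe (X ⧸ Y) α → SzSpLe Y β → SzSpLe X (α * β)) ∧
    (∀ ξ : Ordinal,
      (∃ γ < Ordinal.omega0 ^ Ordinal.omega0 ^ ξ, SzSpLe (X ⧸ Y) γ) →
      (∃ γ < Ordinal.omega0 ^ Ordinal.omega0 ^ ξ, SzSpLe Y γ) →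
      ∃ γ < Ordinal.omega0 ^ Ordinal.omega0 ^ ξ, SzSpLe X γ) ∧
    (∀ ξ : Ordinal,
      SzSpLe (X ⧸ Y) (Ordinal.omega0 ^ Ordinal.omega0 ^ ξ) →
      SzSpLe Y (Ordinal.omega0 ^ Ordinal.omega0 ^ ξ) →
      SzSpLe X (Ordinal.omega0 ^ Ordinal.omega0 ^ ξ)) :=
  szlenk_three_space_general Y (hY := hY)
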